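/- arXiv:1810.02687 — 2 statements merged into one kernel-verified Lean document; each statement's English description precedes it below -/
import Mathlib

section
/- Fix r > 1 and α ∈ (1/2, 1]. For N ≥ 2 set c = ⌈N^{1−α}⌉, v = N, h_v = (v + c·r)/(v·r² + c·r) and h_c = (c + v·r)/(c·r² + v·r). Then (i) h_c^c → 1 as N → ∞, and (ii) there exists N₀ such that h_c^c > h_v for all N ≥ N₀. -/
open Filter Topology

/-!
Write `c = ⌈N^{1−α}⌉`. Since `1 − h_c = c(r² − 1)/(c r² + N r) ≤ c(r² − 1)/(N r)`, Bernoulli's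
inequality gives `1 ≥ h_c^c ≥ 1 − c²(r² − 1)/(N r)`, and `c²/N = O(N^{1−2α}) → 0` because `α > 1/2`;
this is (i). For (ii), `c ≤ N` forces `h_v ≤ 1/r < 1`, while `h_c^c → 1`.
-/

/-- The size `c = ⌈N^{1−α}⌉` of the center of the α-Balanced bipartite graph. -/
noncomputable def centerSize (α : ℝ) (N : ℕ) : ℕ := ⌈(N : ℝ) ^ (1 - α)⌉₊

/-- The martingale constant `h_v = (v + c·r)/(v·r² + c·r)` of the outside part of
the α-Balanced bipartite graph with `v = N` and `c = ⌈N^{1−α}⌉`. -/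
noncomputable def hV (r α : ℝ) (N : ℕ) : ℝ :=
  ((N : ℝ) + (centerSize α N : ℝ) * r) / ((N : ℝ) * r ^ 2 + (centerSize α N : ℝ) * r)

/-- The martingale constant `h_c = (c + v·r)/(c·r² + v·r)` of the center of
the α-Balanced bipartite graph with `v = N` and `c = ⌈N^{1−α}⌉`. -/
noncomputable def hC (r α : ℝ) (N : ℕ) : ℝ :=
  ((centerSize α N : ℝ) + (N : ℝ) * r) / ((centerSize α N : ℝ) * r ^ 2 + (N : ℝ) * r)

/-- The constant `h` of a part of size `a` whose opposite part has size `b`; thus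
`hC r α N = potentialRatio r c N` and `hV r α N = potentialRatio r N c` by definition. -/
noncomputable def potentialRatio (r a b : ℝ) : ℝ := (a + b * r) / (a * r ^ 2 + b * r)

section PotentialRatio

variable {r a b : ℝ}

lemma potentialRatio_nonneg (ha : 0 ≤ a) (hb : 0 ≤ b) (hr : 0 ≤ r) :
    0 ≤ potentialRatio r a b := by
  unfold potentialRatio; positivity

lemma potentialRatio_le_one (ha : 0 ≤ a) (hb : 0 < b) (hr : 1 ≤ r) :
    potentialRatio r a b ≤ 1 := by
  rw [potentialRatio, div_le_one (by positivity)]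
  nlinarith [mul_nonneg ha (by nlinarith : (0:ℝ) ≤ r ^ 2 - 1)]

lemma one_sub_potentialRatio (h : a * r ^ 2 + b * r ≠ 0) :
    1 - potentialRatio r a b = a * (r ^ 2 - 1) / (a * r ^ 2 + b * r) := by
  rw [potentialRatio, one_sub_div h]
  ring

lemma potentialRatio_le_inv (hb : 0 ≤ b) (hba : b ≤ a) (ha : 0 < a) (hr : 1 ≤ r) :
    potentialRatio r a b ≤ r⁻¹ := by
  have hr0 : 0 < r := by linarith
  rw [potentialRatio, ← one_div, div_le_div_iff₀ (by positivity) hr0]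
  nlinarith [mul_nonneg (mul_nonneg (sub_nonneg.2 hba) hr0.le) (sub_nonneg.2 hr)]

/-- Bernoulli's inequality `h^n ≥ 1 - n (1 - h)`, with `1 - h ≤ n (r² - 1) / (b r)`. -/
lemma one_sub_mul_sq_div_le_potentialRatio_pow (n : ℕ) (hb : 0 < b) (hr : 1 ≤ r) :
    1 - (r ^ 2 - 1) / r * ((n : ℝ) ^ 2 / b) ≤ potentialRatio r n b ^ n := by
  have hr0 : 0 < r := by linarith
  have hD : 0 < (n : ℝ) * r ^ 2 + b * r := by positivity
  have hgap : 1 - potentialRatio r n b ≤ n * (r ^ 2 - 1) / (b * r) := by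
    rw [one_sub_potentialRatio hD.ne']
    exact div_le_div_of_nonneg_left (mul_nonneg n.cast_nonneg (by nlinarith)) (by positivity)
      (by nlinarith [n.cast_nonneg (α := ℝ)])
  have hbern := one_add_mul_le_pow (a := potentialRatio r n b - 1)
    (by linarith [potentialRatio_nonneg n.cast_nonneg hb.le hr0.le]) n
  rw [add_sub_cancel] at hbern
  calc 1 - (r ^ 2 - 1) / r * ((n : ℝ) ^ 2 / b) = 1 - n * (n * (r ^ 2 - 1) / (b * r)) := by
        field_simp
    _ ≤ 1 + n * (potentialRatio r n b - 1) := by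
        nlinarith [n.cast_nonneg (α := ℝ)]
    _ ≤ _ := hbern

end PotentialRatio

section CenterSize

variable {α : ℝ} {N : ℕ}

lemma centerSize_le_self (hα0 : 0 ≤ α) (hN : 1 ≤ N) : centerSize α N ≤ N := by
  refine Nat.ceil_le.mpr ?_
  calc (N : ℝ) ^ (1 - α) ≤ (N : ℝ) ^ (1 : ℝ) :=
        Real.rpow_le_rpow_of_exponent_le (by exact_mod_cast hN) (by linarith)
    _ = N := Real.rpow_one _

lemma centerSize_le_two_mul_rpow (hα1 : α ≤ 1) (hN : 1 ≤ N) :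
    (centerSize α N : ℝ) ≤ 2 * (N : ℝ) ^ (1 - α) := by
  have hceil := Nat.ceil_lt_add_one (Real.rpow_nonneg (Nat.cast_nonneg N) (1 - α))
  have hone : 1 ≤ (N : ℝ) ^ (1 - α) :=
    Real.one_le_rpow (by exact_mod_cast hN) (by linarith)
  unfold centerSize
  linarith

/-- `c² / N ≤ 4 N^{1 - 2α}`. -/
lemma tendsto_centerSize_sq_div (hα0 : 1 / 2 < α) (hα1 : α ≤ 1) :
    Tendsto (fun N : ℕ => (centerSize α N : ℝ) ^ 2 / N) atTop (𝓝 0) := by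
  have hpow : Tendsto (fun N : ℕ => 4 * (N : ℝ) ^ (1 - 2 * α)) atTop (𝓝 0) := by
    have h := (tendsto_rpow_neg_atTop (by linarith : 0 < 2 * α - 1)).comp
      tendsto_natCast_atTop_atTop
    simpa [Function.comp_def] using h.const_mul 4
  refine tendsto_of_tendsto_of_tendsto_of_le_of_le' tendsto_const_nhds hpow
    (Eventually.of_forall fun N => by positivity) ?_
  filter_upwards [eventually_ge_atTop 1] with N hN
  have hN0 : (0 : ℝ) < N := by exact_mod_cast hN
  have hsq : (centerSize α N : ℝ) ^ 2 ≤ 4 * ((N : ℝ) ^ (1 - α)) ^ 2 := by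
    nlinarith [centerSize_le_two_mul_rpow hα1 hN, (centerSize α N).cast_nonneg (α := ℝ)]
  calc (centerSize α N : ℝ) ^ 2 / N ≤ 4 * ((N : ℝ) ^ (1 - α)) ^ 2 / N := by gcongr
    _ = 4 * (N : ℝ) ^ (1 - 2 * α) := by
        rw [← Real.rpow_natCast, ← Real.rpow_mul hN0.le, mul_div_assoc,
          ← Real.rpow_sub_one hN0.ne']
        ring_nf

end CenterSize

/-- In the 'small center' regime `α ∈ (1/2, 1]`: (i) `h_c^c → 1` as `N → ∞`, and
(ii) `h_c^c > h_v` for all sufficiently large `N`. -/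
theorem small_center_potential_estimates
    (r α : ℝ) (hr : 1 < r) (hα0 : 1 / 2 < α) (hα1 : α ≤ 1) :
    Tendsto (fun N : ℕ => hC r α N ^ centerSize α N) atTop (𝓝 1) ∧
    ∃ N₀ : ℕ, ∀ N : ℕ, N₀ ≤ N → hC r α N ^ centerSize α N > hV r α N := by
  have hlower : Tendsto (fun N : ℕ => 1 - (r ^ 2 - 1) / r * ((centerSize α N : ℝ) ^ 2 / N))
      atTop (𝓝 1) := by
    simpa using tendsto_const_nhds.sub ((tendsto_centerSize_sq_div hα0 hα1).const_mul _)
  have hlim : Tendsto (fun N : ℕ => hC r α N ^ centerSize α N) atTop (𝓝 1) := by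
    have hbounds : ∀ᶠ N : ℕ in atTop,
        1 - (r ^ 2 - 1) / r * ((centerSize α N : ℝ) ^ 2 / N) ≤ hC r α N ^ centerSize α N ∧
          hC r α N ^ centerSize α N ≤ 1 := by
      filter_upwards [eventually_gt_atTop 0] with N hN
      have hN0 : (0 : ℝ) < N := by exact_mod_cast hN
      exact ⟨one_sub_mul_sq_div_le_potentialRatio_pow _ hN0 hr.le,
        pow_le_one₀ (potentialRatio_nonneg (Nat.cast_nonneg _) hN0.le (by linarith))
          (potentialRatio_le_one (Nat.cast_nonneg _) hN0 hr.le)⟩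
    exact tendsto_of_tendsto_of_tendsto_of_le_of_le' hlower tendsto_const_nhds
      (hbounds.mono fun _ h => h.1) (hbounds.mono fun _ h => h.2)
  refine ⟨hlim, ?_⟩
  obtain ⟨N₁, hN₁⟩ :=
    eventually_atTop.mp (hlim.eventually (eventually_gt_nhds (inv_lt_one_of_one_lt₀ hr)))
  refine ⟨max N₁ 1, fun N hN => ?_⟩
  have hV_le : hV r α N ≤ r⁻¹ :=
    potentialRatio_le_inv (Nat.cast_nonneg _)
      (by exact_mod_cast centerSize_le_self (by linarith) (le_of_max_le_right hN))
      (by exact_mod_cast le_of_max_le_right hN) hr.le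
  exact hV_le.trans_lt (hN₁ N (le_of_max_le_left hN))
end

section
/- Fix r > 1 and α ∈ (0,1). For N ≥ 2 set v = N, c = ⌈N^{1−α}⌉, q = N^{−α/2}, h_v = (q·v + c·r)/(q·v·r² + c·r) and h_c = (c + q·v·r)/(c·r² + q·v·r). Then (1 − h_v)/(1 − h_v^v·h_c^c) converges to 1 − 1/r² as N → ∞. -/
open Filter Topology

/-- The migration probability `q = N^{−α/2}` of the α-Weighted bipartite graph. -/
noncomputable def migrProb (α : ℝ) (N : ℕ) : ℝ := (N : ℝ) ^ (-(α / 2))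

/-- The martingale constant `h_v = (q·v + c·r)/(q·v·r² + c·r)` of the larger part of
the α-Weighted bipartite graph with `v = N`, `c = ⌈N^{1−α}⌉` and `q = N^{−α/2}`. -/
noncomputable def hVW (r α : ℝ) (N : ℕ) : ℝ :=
  (migrProb α N * (N : ℝ) + (centerSize α N : ℝ) * r)
    / (migrProb α N * (N : ℝ) * r ^ 2 + (centerSize α N : ℝ) * r)

/-- The martingale constant `h_c = (c + q·v·r)/(c·r² + q·v·r)` of the center of
the α-Weighted bipartite graph with `v = N`, `c = ⌈N^{1−α}⌉` and `q = N^{−α/2}`. -/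
noncomputable def hCW (r α : ℝ) (N : ℕ) : ℝ :=
  ((centerSize α N : ℝ) + migrProb α N * (N : ℝ) * r)
    / ((centerSize α N : ℝ) * r ^ 2 + migrProb α N * (N : ℝ) * r)

/-!
The center has `c ≈ N^{1-α}` vertices while the migration mass is `q·v = N^{1-α/2}`, so
`c / (q·v) → 0` and `h_v → 1/r²`. Since `r > 1` we also have `0 ≤ h_c ≤ 1`, hence
`h_v^v·h_c^c ≤ h_v^N` decays geometrically: the denominator tends to `1` and the numerator
to `1 - 1/r²`.
-/

lemma tendsto_natCast_rpow_atTop_nhds_zero {β : ℝ} (hβ : β < 0) :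
    Tendsto (fun N : ℕ => (N : ℝ) ^ β) atTop (𝓝 0) := by
  simpa [Function.comp_def] using
    (tendsto_rpow_neg_atTop (neg_pos.2 hβ)).comp tendsto_natCast_atTop_atTop

lemma tendsto_natCeil_rpow_div_rpow {a b : ℝ} (hab : a < b) (hb : 0 < b) :
    Tendsto (fun N : ℕ => (⌈(N : ℝ) ^ a⌉₊ : ℝ) / (N : ℝ) ^ b) atTop (𝓝 0) := by
  have hbound : Tendsto (fun N : ℕ => (N : ℝ) ^ (a - b) + (N : ℝ) ^ (-b)) atTop (𝓝 0) := by
    simpa using (tendsto_natCast_rpow_atTop_nhds_zero (sub_neg.2 hab)).add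
      (tendsto_natCast_rpow_atTop_nhds_zero (neg_neg_of_pos hb))
  refine squeeze_zero' (Eventually.of_forall fun N => by positivity) ?_ hbound
  filter_upwards [eventually_gt_atTop 0] with N hN
  have hNpos : (0 : ℝ) < N := Nat.cast_pos.2 hN
  calc (⌈(N : ℝ) ^ a⌉₊ : ℝ) / (N : ℝ) ^ b ≤ ((N : ℝ) ^ a + 1) / (N : ℝ) ^ b := by
        gcongr
        exact (Nat.ceil_lt_add_one (by positivity)).le
    _ = (N : ℝ) ^ (a - b) + (N : ℝ) ^ (-b) := by
        rw [add_div, ← Real.rpow_sub hNpos, Real.rpow_neg hNpos.le, one_div]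

lemma tendsto_pow_self_mul_pow_of_tendsto_lt_one {x y : ℕ → ℝ} {m : ℕ → ℕ} {L : ℝ}
    (hx0 : ∀ n, 0 ≤ x n) (hx : Tendsto x atTop (𝓝 L)) (hL : L < 1)
    (hy0 : ∀ n, 0 ≤ y n) (hy1 : ∀ n, y n ≤ 1) :
    Tendsto (fun n => x n ^ n * y n ^ m n) atTop (𝓝 0) := by
  obtain ⟨a, hLa, ha1⟩ := exists_between hL
  have ha0 : 0 ≤ a := (ge_of_tendsto' hx hx0).trans hLa.le
  refine squeeze_zero' (Eventually.of_forall fun n => by have := hx0 n; have := hy0 n; positivity)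
    ?_ (tendsto_pow_atTop_nhds_zero_of_lt_one ha0 ha1)
  filter_upwards [hx.eventually_lt_const hLa] with n hxa
  calc x n ^ n * y n ^ m n ≤ x n ^ n * 1 :=
        mul_le_mul_of_nonneg_left (pow_le_one₀ (hy0 n) (hy1 n)) (pow_nonneg (hx0 n) n)
    _ ≤ a ^ n := by rw [mul_one]; exact pow_le_pow_left₀ (hx0 n) hxa.le n

section WeightedBipartite

variable {r α : ℝ}

lemma migrProb_mul_natCast {N : ℕ} (hN : 0 < N) :
    migrProb α N * N = (N : ℝ) ^ (1 - α / 2) := by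
  rw [migrProb, sub_eq_neg_add, Real.rpow_add (Nat.cast_pos.2 hN), Real.rpow_one]

lemma tendsto_centerSize_div_migrProb_mul (hα0 : 0 < α) (hα2 : α < 2) :
    Tendsto (fun N : ℕ => (centerSize α N : ℝ) / (migrProb α N * N)) atTop (𝓝 0) := by
  refine (tendsto_natCeil_rpow_div_rpow (a := 1 - α) (b := 1 - α / 2)
    (by linarith) (by linarith)).congr' ?_
  filter_upwards [eventually_gt_atTop 0] with N hN
  rw [migrProb_mul_natCast hN, centerSize]

lemma hVW_eq {N : ℕ} (hN : 0 < N) :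
    hVW r α N = (1 + (centerSize α N : ℝ) / (migrProb α N * N) * r)
      / (r ^ 2 + (centerSize α N : ℝ) / (migrProb α N * N) * r) := by
  have hqN : migrProb α N * N ≠ 0 := by rw [migrProb_mul_natCast hN]; positivity
  rw [hVW, ← mul_div_mul_right (1 + _) (r ^ 2 + _) hqN]
  generalize migrProb α N * N = a at hqN ⊢
  congr 1 <;> field_simp

lemma tendsto_hVW (hr : 0 < r) (hα0 : 0 < α) (hα2 : α < 2) :
    Tendsto (fun N : ℕ => hVW r α N) atTop (𝓝 (1 / r ^ 2)) := by
  have hs := (tendsto_centerSize_div_migrProb_mul hα0 hα2).mul_const r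
  have hlim := (tendsto_const_nhds (x := (1 : ℝ)).add hs).div
    (tendsto_const_nhds (x := r ^ 2).add hs) (by positivity)
  simp only [zero_mul, add_zero] at hlim
  refine hlim.congr' ?_
  filter_upwards [eventually_gt_atTop 0] with N hN
  exact (hVW_eq hN).symm

lemma hVW_nonneg (hr : 0 ≤ r) (N : ℕ) : 0 ≤ hVW r α N := by
  have : 0 ≤ migrProb α N := Real.rpow_nonneg (Nat.cast_nonneg N) _
  rw [hVW]
  positivity

lemma hCW_nonneg (hr : 0 ≤ r) (N : ℕ) : 0 ≤ hCW r α N := by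
  have : 0 ≤ migrProb α N := Real.rpow_nonneg (Nat.cast_nonneg N) _
  rw [hCW]
  positivity

lemma hCW_le_one (hr : 1 ≤ r) (N : ℕ) : hCW r α N ≤ 1 := by
  have : 0 ≤ migrProb α N := Real.rpow_nonneg (Nat.cast_nonneg N) _
  rw [hCW]
  refine div_le_one_of_le₀ ?_ (by positivity)
  have : (centerSize α N : ℝ) ≤ centerSize α N * r ^ 2 :=
    le_mul_of_one_le_right (Nat.cast_nonneg _) (one_le_pow₀ hr)
  linarith

end WeightedBipartite

/-- The fixation probability `(1 − h_v)/(1 − h_v^v·h_c^c)` of a single mutant placed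
in the larger part of the α-Weighted bipartite graph tends to `1 − 1/r²`. -/
theorem weighted_bipartite_single_mutant_fixation
    (r α : ℝ) (hr : 1 < r) (hα0 : 0 < α) (hα1 : α < 1) :
    Tendsto (fun N : ℕ =>
        (1 - hVW r α N) / (1 - hVW r α N ^ N * hCW r α N ^ centerSize α N))
      atTop (𝓝 (1 - 1 / r ^ 2)) := by
  have hr0 : 0 < r := by linarith
  have hv := tendsto_hVW hr0 hα0 (by linarith)
  have hlt : 1 / r ^ 2 < 1 := by rw [div_lt_one (by positivity)]; nlinarith
  have hprod := tendsto_pow_self_mul_pow_of_tendsto_lt_one (y := hCW r α) (m := centerSize α)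
    (hVW_nonneg hr0.le) hv hlt (hCW_nonneg hr0.le) (hCW_le_one hr.le)
  have hlim := (tendsto_const_nhds (x := (1 : ℝ)).sub hv).div
    (tendsto_const_nhds (x := (1 : ℝ)).sub hprod) (by norm_num)
  rwa [sub_zero, div_one] at hlim
end
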